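/- Completeness of seminaïve materialisation: for each k ∈ ℕ, T_Π^k(I_D) is contained in the least model of the partial materialisation D' upon completion of the k-th iteration of the seminaïve procedure. -/

import Mathlib

/-! # A formalisation of basic DatalogMTL notions (ground setting) -/

/-- An interval is an order-convex subset of `ℚ`. -/
def IsInterval (s : Set ℚ) : Prop :=
  ∀ t1 t2 t3 : ℚ, t1 < t2 → t2 < t3 → t1 ∈ s → t3 ∈ s → t2 ∈ s

/-- Interpretations assign to each rational time point a set of ground relational atoms. -/
abbrev Interp (Atom : Type) := ℚ → Set Atom

/-- Ground metric atoms. -/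
inductive MA (Atom : Type) where
  | top : MA Atom
  | bot : MA Atom
  | atom (A : Atom) : MA Atom
  | dminus (ρ : Set ℚ) (M : MA Atom) : MA Atom
  | dplus (ρ : Set ℚ) (M : MA Atom) : MA Atom
  | bminus (ρ : Set ℚ) (M : MA Atom) : MA Atom
  | bplus (ρ : Set ℚ) (M : MA Atom) : MA Atom
  | since (ρ : Set ℚ) (M1 M2 : MA Atom) : MA Atom
  | untl (ρ : Set ℚ) (M1 M2 : MA Atom) : MA Atom

variable {Atom : Type}

/-- Satisfaction of ground metric atoms at a time point. -/
def sat (I : Interp Atom) : ℚ → MA Atom → Prop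
  | _, .top => True
  | _, .bot => False
  | t, .atom A => A ∈ I t
  | t, .dminus ρ M => ∃ t', t - t' ∈ ρ ∧ sat I t' M
  | t, .dplus ρ M => ∃ t', t' - t ∈ ρ ∧ sat I t' M
  | t, .bminus ρ M => ∀ t', t - t' ∈ ρ → sat I t' M
  | t, .bplus ρ M => ∀ t', t' - t ∈ ρ → sat I t' M
  | t, .since ρ M1 M2 =>
      ∃ t', t - t' ∈ ρ ∧ sat I t' M2 ∧ ∀ t'', t' < t'' → t'' < t → sat I t'' M1
  | t, .untl ρ M1 M2 =>
      ∃ t', t' - t ∈ ρ ∧ sat I t' M2 ∧ ∀ t'', t < t'' → t'' < t' → sat I t'' M1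

/-- Ground rule heads, generated by `⊥ | A | ⊟ρ | ⊞ρ`. -/
inductive Hd (Atom : Type) where
  | bot : Hd Atom
  | atom (A : Atom) : Hd Atom
  | bminus (ρ : Set ℚ) (h : Hd Atom) : Hd Atom
  | bplus (ρ : Set ℚ) (h : Hd Atom) : Hd Atom

/-- The metric atom corresponding to a head. -/
def Hd.toMA : Hd Atom → MA Atom
  | .bot => .bot
  | .atom A => .atom A
  | .bminus ρ h => .bminus ρ h.toMA
  | .bplus ρ h => .bplus ρ h.toMA

/-- Whether a head mentions `⊥` (i.e. the rule is a `⊥`-rule). -/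
def Hd.isBot : Hd Atom → Prop
  | .bot => True
  | .atom _ => False
  | .bminus _ h => h.isBot
  | .bplus _ h => h.isBot

/-- The relational atom occurring in a head (none for `⊥`-heads). -/
def Hd.atomOf : Hd Atom → Option Atom
  | .bot => none
  | .atom A => some A
  | .bminus _ h => h.atomOf
  | .bplus _ h => h.atomOf

/-- A ground rule with a non-empty body. -/
structure Rule (Atom : Type) where
  head : Hd Atom
  body : List (MA Atom)
  body_ne : body ≠ []

/-- `Forces h t A t'` : satisfying head `h` at time `t` requires atom `A` at time `t'`. -/
inductive Forces : Hd Atom → ℚ → Atom → ℚ → Prop where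
  | atom (A : Atom) (t : ℚ) : Forces (.atom A) t A t
  | bminus {h : Hd Atom} {s A t'} (ρ : Set ℚ) (t : ℚ) :
      t - s ∈ ρ → Forces h s A t' → Forces (.bminus ρ h) t A t'
  | bplus {h : Hd Atom} {s A t'} (ρ : Set ℚ) (t : ℚ) :
      s - t ∈ ρ → Forces h s A t' → Forces (.bplus ρ h) t A t'

/-- The immediate consequence operator: the least interpretation containing `I` and
satisfying the head of every non-`⊥` ground rule at every time point where `I`
satisfies all its body atoms. -/
def TP (Φ : Set (Rule Atom)) (I : Interp Atom) : Interp Atom :=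
  fun t => I t ∪
    {A | ∃ r ∈ Φ, ¬ r.head.isBot ∧
      ∃ t0, (∀ M ∈ r.body, sat I t0 M) ∧ Forces r.head t0 A t}

/-- A fact `M@ρ` : a ground relational atom together with an interval. -/
abbrev DFact (Atom : Type) := Atom × Set ℚ

abbrev Dataset (Atom : Type) := Set (DFact Atom)

/-- The least model of a dataset. -/
def leastModel (D : Dataset Atom) : Interp Atom :=
  fun t => {A | ∃ ρ, (A, ρ) ∈ D ∧ t ∈ ρ}

/-- `D ⊨ M@ρ`. -/
def dsat (D : Dataset Atom) (M : MA Atom) (ρ : Set ℚ) : Prop :=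
  ∀ t ∈ ρ, sat (leastModel D) t M

def modelsRule (I : Interp Atom) (r : Rule Atom) : Prop :=
  ∀ t, (∀ M ∈ r.body, sat I t M) → sat I t r.head.toMA

def modelsProg (I : Interp Atom) (Φ : Set (Rule Atom)) : Prop :=
  ∀ r ∈ Φ, modelsRule I r

def modelsData (I : Interp Atom) (D : Dataset Atom) : Prop :=
  ∀ F ∈ D, ∀ t ∈ F.2, F.1 ∈ I t

def consistent (Φ : Set (Rule Atom)) (D : Dataset Atom) : Prop :=
  ∃ I, modelsProg I Φ ∧ modelsData I D

/-- `Φ, D ⊨ A@ρ`. -/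
def entailsFact (Φ : Set (Rule Atom)) (D : Dataset Atom) (A : Atom) (ρ : Set ℚ) : Prop :=
  ∀ I, modelsProg I Φ → modelsData I D → ∀ t ∈ ρ, A ∈ I t

/-- Transfinite iteration of an operator on interpretations, taking unions at limits. -/
noncomputable def iterT (T : Interp Atom → Interp Atom) (I0 : Interp Atom) :
    Ordinal → Interp Atom :=
  fun o =>
    Ordinal.limitRecOn o I0 (fun _ ih => T ih)
      (fun o _ ih => fun t => {A | ∃ o', ∃ h : o' < o, A ∈ ih o' h t})

/-- The first uncountable ordinal. -/
noncomputable def omega1 : Ordinal := (Cardinal.aleph 1).ord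

/-- One coalescing step: replace two facts over the same atom whose intervals are
union-compatible by their union. -/
def CoalStep (D D' : Dataset Atom) : Prop :=
  ∃ A ρ1 ρ2, (A, ρ1) ∈ D ∧ (A, ρ2) ∈ D ∧
    IsInterval ρ1 ∧ IsInterval ρ2 ∧ IsInterval (ρ1 ∪ ρ2) ∧ ¬ (ρ1 = ρ2) ∧
    D' = (D \ {(A, ρ1), (A, ρ2)}) ∪ {(A, ρ1 ∪ ρ2)}

/-- `D'` is the result of exhaustively coalescing `E`. -/
def coalescedFrom (E D' : Dataset Atom) : Prop :=
  Relation.ReflTransGen CoalStep E D' ∧ ∀ E', ¬ CoalStep D' E'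

/-- `ρ` is a subset-maximal interval on which `D` satisfies `M`. -/
def maxSat (D : Dataset Atom) (M : MA Atom) (ρ : Set ℚ) : Prop :=
  IsInterval ρ ∧ dsat D M ρ ∧
    ∀ ρ', IsInterval ρ' → dsat D M ρ' → ρ ⊆ ρ' → ρ' = ρ

/-- Semantic entailment `M@ρ0 ⊨ A@ρ` between a metric fact and a relational fact. -/
def mfEntails (M : MA Atom) (ρ0 : Set ℚ) (A : Atom) (ρ : Set ℚ) : Prop :=
  ∀ I : Interp Atom, (∀ s ∈ ρ0, sat I s M) → ∀ t ∈ ρ, A ∈ I t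

/-- An instance of rule `r` for dataset `D` : a list of subset-maximal intervals
for the body atoms. -/
def instOf (r : Rule Atom) (D : Dataset Atom) (ρs : List (Set ℚ)) : Prop :=
  List.Forall₂ (fun M ρ => maxSat D M ρ) r.body ρs

/-- The intersection of a list of intervals. -/
def interList (ρs : List (Set ℚ)) : Set ℚ := ρs.foldr (· ∩ ·) Set.univ

/-- The set of facts derived by rule `r` from dataset `D`. -/
def der (r : Rule Atom) (D : Dataset Atom) : Dataset Atom :=
  {F | ¬ r.head.isBot ∧ r.head.atomOf = some F.1 ∧
    ∃ ρs, instOf r D ρs ∧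
      mfEntails r.head.toMA (interList ρs) F.1 F.2 ∧ IsInterval F.2 ∧
      ∀ ρ', IsInterval ρ' → mfEntails r.head.toMA (interList ρs) F.1 ρ' →
        F.2 ⊆ ρ' → ρ' = F.2}

/-- `Φ[D]`: facts derived from `D` by a one-step application of `Φ`. -/
def progApply (Φ : Set (Rule Atom)) (D : Dataset Atom) : Dataset Atom :=
  {F | ∃ r ∈ Φ, F ∈ der r D}

/-- Instances of `r` for `D` relative to `Δ`. -/
def instOfRel (r : Rule Atom) (D Δ : Dataset Atom) (ρs : List (Set ℚ)) : Prop :=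
  instOf r D ρs ∧ ∃ p ∈ r.body.zip ρs, ¬ dsat (D \ Δ) p.1 p.2

/-- Facts derived by `r` from `D` relative to `Δ`. -/
def derRel (r : Rule Atom) (D Δ : Dataset Atom) : Dataset Atom :=
  {F | ¬ r.head.isBot ∧ r.head.atomOf = some F.1 ∧
    ∃ ρs, instOfRel r D Δ ρs ∧
      mfEntails r.head.toMA (interList ρs) F.1 F.2 ∧ IsInterval F.2 ∧
      ∀ ρ', IsInterval ρ' → mfEntails r.head.toMA (interList ρs) F.1 ρ' →
        F.2 ⊆ ρ' → ρ' = F.2}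

/-- `Φ[D ⋮ Δ]`: one-step semina\"ive application. -/
def progApplyRel (Φ : Set (Rule Atom)) (D Δ : Dataset Atom) : Dataset Atom :=
  {F | ∃ r ∈ Φ, F ∈ derRel r D Δ}

/-- A relational fact entails another relational fact. -/
def dfactEntails (F G : DFact Atom) : Prop := F.1 = G.1 ∧ G.2 ⊆ F.2

/-- A dataset entails a relational fact. -/
def factEntailedBy (E : Dataset Atom) (G : DFact Atom) : Prop :=
  ∀ t ∈ G.2, G.1 ∈ leastModel E t

/-- Atoms occurring in a metric atom. -/
def atomsMA : MA Atom → Set Atom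
  | .top => ∅
  | .bot => ∅
  | .atom A => {A}
  | .dminus _ M => atomsMA M
  | .dplus _ M => atomsMA M
  | .bminus _ M => atomsMA M
  | .bplus _ M => atomsMA M
  | .since _ M1 M2 => atomsMA M1 ∪ atomsMA M2
  | .untl _ M1 M2 => atomsMA M1 ∪ atomsMA M2

/-- Atoms occurring in a head. -/
def atomsHd : Hd Atom → Set Atom
  | .bot => ∅
  | .atom A => {A}
  | .bminus _ h => atomsHd h
  | .bplus _ h => atomsHd h

/-- Atoms occurring in a rule. -/
def atomsRule (r : Rule Atom) : Set Atom :=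
  atomsHd r.head ∪ {A | ∃ M ∈ r.body, A ∈ atomsMA M}

section Predicates

variable {Pred : Type} (Φ : Set (Rule Atom)) (pr : Atom → Pred)

/-- Edge `(Q, R)` of the dependency graph: some rule mentions `Q` in the body
and `R` in the head. -/
def Edge (Q R : Pred) : Prop :=
  ∃ r ∈ Φ, (∃ M ∈ r.body, ∃ A ∈ atomsMA M, pr A = Q) ∧ ∃ A ∈ atomsHd r.head, pr A = R

/-- A predicate is recursive in `Φ` if some path including a cycle ends in it. -/
def RecursivePred (P : Pred) : Prop :=
  ∃ Q, Relation.TransGen (Edge Φ pr) Q Q ∧ Relation.ReflTransGen (Edge Φ pr) Q P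

/-- A rule `r` is `P`-relevant in `Φ`. -/
def PRelevant (P : Pred) (r : Rule Atom) : Prop :=
  ∃ r' ∈ Φ, (r'.head.isBot ∨ ∃ A ∈ atomsHd r'.head, pr A = P) ∧
    ∃ Qh, (∃ A ∈ atomsHd r.head, pr A = Qh) ∧
      ∃ Qb, (∃ M ∈ r'.body, ∃ B ∈ atomsMA M, pr B = Qb) ∧
        Relation.ReflTransGen (Edge Φ pr) Qh Qb

/-- Predicates occurring in a program. -/
def predsOfProg (Φ' : Set (Rule Atom)) : Set Pred :=
  {P | ∃ r ∈ Φ', ∃ A ∈ atomsRule r, pr A = P}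

end Predicates

/-- An interval containing only non-negative rationals. -/
def NonnegInt (ρ : Set ℚ) : Prop := ∀ q ∈ ρ, 0 ≤ q

/-- Metric atoms mentioning only past operators (no `⊤`, `⊥`). -/
def pastOnly : MA Atom → Prop
  | .atom _ => True
  | .dminus ρ M => NonnegInt ρ ∧ pastOnly M
  | .bminus ρ M => NonnegInt ρ ∧ pastOnly M
  | .since ρ M1 M2 => NonnegInt ρ ∧ pastOnly M1 ∧ pastOnly M2
  | _ => False

/-- Heads mentioning only future operators (no `⊥`). -/
def futureHead : Hd Atom → Prop
  | .atom _ => True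
  | .bplus ρ h => NonnegInt ρ ∧ futureHead h
  | _ => False

/-- A forward-propagating program. -/
def ForwardProp (Φ : Set (Rule Atom)) : Prop :=
  ∀ r ∈ Φ, futureHead r.head ∧ ∀ M ∈ r.body, pastOnly M

section SeminaiveAux

variable {Atom : Type}

/-- Satisfaction of metric atoms is monotone in the interpretation. -/
lemma sat_mono {I I' : Interp Atom} (h : ∀ s, I s ⊆ I' s) :
    ∀ (M : MA Atom) (t : ℚ), sat I t M → sat I' t M := by
  intro M
  induction M with
  | top => intro t _; trivial
  | bot => intro t hs; exact hs
  | atom A => intro t hs; exact h t hs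
  | dminus ρ M ih => rintro t ⟨t', h1, h2⟩; exact ⟨t', h1, ih t' h2⟩
  | dplus ρ M ih => rintro t ⟨t', h1, h2⟩; exact ⟨t', h1, ih t' h2⟩
  | bminus ρ M ih => intro t hs t' ht'; exact ih t' (hs t' ht')
  | bplus ρ M ih => intro t hs t' ht'; exact ih t' (hs t' ht')
  | since ρ M1 M2 ih1 ih2 =>
      rintro t ⟨t', h1, h2, h3⟩
      exact ⟨t', h1, ih2 t' h2, fun t'' ha hb => ih1 t'' (h3 t'' ha hb)⟩
  | untl ρ M1 M2 ih1 ih2 =>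
      rintro t ⟨t', h1, h2, h3⟩
      exact ⟨t', h1, ih2 t' h2, fun t'' ha hb => ih1 t'' (h3 t'' ha hb)⟩

lemma mem_lm {D : Dataset Atom} {t : ℚ} {G : DFact Atom} (hG : G ∈ D) (ht : t ∈ G.2) :
    G.1 ∈ leastModel D t := ⟨G.2, hG, ht⟩

/-- One coalescing step covers every old fact by a new one. -/
lemma coalStep_cover {C C' : Dataset Atom} (h : CoalStep C C') :
    ∀ F ∈ C, ∃ F' ∈ C', F.1 = F'.1 ∧ F.2 ⊆ F'.2 := by
  obtain ⟨A, ρ1, ρ2, hm1, hm2, _, _, _, _, rfl⟩ := h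
  intro F hF
  by_cases h1 : F = (A, ρ1) ∨ F = (A, ρ2)
  · refine ⟨(A, ρ1 ∪ ρ2), Set.mem_union_right _ rfl, ?_⟩
    rcases h1 with rfl | rfl
    · exact ⟨rfl, Set.subset_union_left⟩
    · exact ⟨rfl, Set.subset_union_right⟩
  · push_neg at h1
    refine ⟨F, Set.mem_union_left _ ⟨hF, ?_⟩, rfl, subset_rfl⟩
    simp only [Set.mem_insert_iff, Set.mem_singleton_iff]
    push_neg
    exact h1

lemma coal_cover {E D'' : Dataset Atom} (h : Relation.ReflTransGen CoalStep E D'') :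
    ∀ F ∈ E, ∃ F' ∈ D'', F.1 = F'.1 ∧ F.2 ⊆ F'.2 := by
  induction h with
  | refl => exact fun F hF => ⟨F, hF, rfl, subset_rfl⟩
  | tail h1 hstep ih =>
    intro F hF
    obtain ⟨F', hF', e, hsub⟩ := ih F hF
    obtain ⟨F'', hF'', e', hsub'⟩ := coalStep_cover hstep F' hF'
    exact ⟨F'', hF'', e.trans e', hsub.trans hsub'⟩

lemma lm_sub_of_coal {E D'' : Dataset Atom} (h : Relation.ReflTransGen CoalStep E D'') :
    ∀ t, leastModel E t ⊆ leastModel D'' t := by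
  rintro t A ⟨ρ, hmem, htρ⟩
  obtain ⟨F', hF', e, hsub⟩ := coal_cover h (A, ρ) hmem
  have := mem_lm hF' (hsub htρ)
  rwa [← e] at this

/-- Each point of a coalesced fact comes from an original fact inside it. -/
lemma coal_struct {E D'' : Dataset Atom} (h : Relation.ReflTransGen CoalStep E D'') :
    ∀ F ∈ D'', ∀ t ∈ F.2, ∃ G ∈ E, G.1 = F.1 ∧ t ∈ G.2 ∧ G.2 ⊆ F.2 := by
  induction h with
  | refl => exact fun F hF t ht => ⟨F, hF, rfl, ht, subset_rfl⟩
  | tail h1 hstep ih =>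
    obtain ⟨A, ρ1, ρ2, hm1, hm2, _, _, _, _, rfl⟩ := hstep
    intro F hF t ht
    rcases hF with ⟨hFb, -⟩ | hF
    · exact ih F hFb t ht
    · have hF' : F = (A, ρ1 ∪ ρ2) := hF
      subst hF'
      rcases ht with ht | ht
      · obtain ⟨G, hG, e, htg, hsub⟩ := ih (A, ρ1) hm1 t ht
        exact ⟨G, hG, e, htg, hsub.trans Set.subset_union_left⟩
      · obtain ⟨G, hG, e, htg, hsub⟩ := ih (A, ρ2) hm2 t ht
        exact ⟨G, hG, e, htg, hsub.trans Set.subset_union_right⟩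

/-- Existence of a subset-maximal interval around a point on which `q` holds. -/
lemma exists_maxInterval (q : ℚ → Prop) (t0 : ℚ) (h : q t0) :
    ∃ ρ : Set ℚ, t0 ∈ ρ ∧ IsInterval ρ ∧ (∀ t ∈ ρ, q t) ∧
      ∀ ρ', IsInterval ρ' → (∀ t ∈ ρ', q t) → ρ ⊆ ρ' → ρ' = ρ := by
  refine ⟨{t | ∃ σ : Set ℚ, IsInterval σ ∧ (∀ s ∈ σ, q s) ∧ t0 ∈ σ ∧ t ∈ σ}, ?ht0, ?hint, ?hq, ?hmax⟩
  case ht0 =>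
    refine ⟨{t0}, ?_, ?_, rfl, rfl⟩
    · intro t1 t2 t3 h12 h23 h1 h3
      rw [Set.mem_singleton_iff] at h1 h3
      exact absurd (h1 ▸ h3 ▸ h12.trans h23) (lt_irrefl _)
    · intro s hs; rw [Set.mem_singleton_iff] at hs; exact hs ▸ h
  case hint =>
    rintro t1 t2 t3 h12 h23 ⟨σ1, hI1, hq1, ht01, ht1⟩ ⟨σ3, hI3, hq3, ht03, ht3⟩
    rcases lt_trichotomy t2 t0 with hlt | heq | hgt
    · exact ⟨σ1, hI1, hq1, ht01, hI1 t1 t2 t0 h12 hlt ht1 ht01⟩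
    · exact ⟨σ1, hI1, hq1, ht01, heq ▸ ht01⟩
    · exact ⟨σ3, hI3, hq3, ht03, hI3 t0 t2 t3 hgt h23 ht03 ht3⟩
  case hq =>
    rintro t ⟨σ, _, hqσ, _, htσ⟩
    exact hqσ t htσ
  case hmax =>
    intro ρ' hI' hq' hsub
    refine subset_antisymm ?_ hsub
    intro t ht
    have ht0' : t0 ∈ ρ' := by
      apply hsub
      refine ⟨{t0}, ?_, ?_, rfl, rfl⟩
      · intro t1 t2 t3 h12 h23 h1 h3
        rw [Set.mem_singleton_iff] at h1 h3
        exact absurd (h1 ▸ h3 ▸ h12.trans h23) (lt_irrefl _)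
      · intro s hs; rw [Set.mem_singleton_iff] at hs; exact hs ▸ h
    exact ⟨ρ', hI', hq', ht0', ht⟩

lemma exists_instance (Dk : Dataset Atom) (t0 : ℚ) :
    ∀ l : List (MA Atom), (∀ M ∈ l, sat (leastModel Dk) t0 M) →
      ∃ ρs, List.Forall₂ (fun M ρ => maxSat Dk M ρ ∧ t0 ∈ ρ) l ρs := by
  intro l
  induction l with
  | nil => exact fun _ => ⟨[], List.Forall₂.nil⟩
  | cons M l ih =>
    intro hb
    obtain ⟨ρs, hρs⟩ := ih (fun M' hM' => hb M' (List.mem_cons_of_mem _ hM'))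
    obtain ⟨ρ, ht0, hI, hq, hmax⟩ :=
      exists_maxInterval (fun t => sat (leastModel Dk) t M) t0 (hb M (List.mem_cons_self))
    exact ⟨ρ :: ρs, List.Forall₂.cons ⟨⟨hI, hq, hmax⟩, ht0⟩ hρs⟩

lemma mem_interList {t0 : ℚ} {l : List (MA Atom)} {ρs : List (Set ℚ)}
    (h : List.Forall₂ (fun _ ρ => t0 ∈ ρ) l ρs) : t0 ∈ interList ρs := by
  induction h with
  | nil => trivial
  | cons h _ ih => exact ⟨h, ih⟩

lemma forall₂_zip_mem {α β : Type*} {R : α → β → Prop} {l : List α} {l' : List β}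
    (h : List.Forall₂ R l l') : ∀ {a}, a ∈ l → ∃ b, (a, b) ∈ l.zip l' ∧ R a b := by
  induction h with
  | nil => intro a ha; simp at ha
  | cons hR h ih =>
    intro a ha
    rcases List.mem_cons.1 ha with rfl | ha
    · exact ⟨_, List.mem_cons_self, hR⟩
    · obtain ⟨b, hb, hRb⟩ := ih ha
      exact ⟨b, List.mem_cons_of_mem _ hb, hRb⟩

lemma forces_atomOf {h : Hd Atom} {t0 : ℚ} {A : Atom} {t : ℚ}
    (hf : Forces h t0 A t) : h.atomOf = some A := by
  induction hf with
  | atom => rfl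
  | bminus _ _ _ _ ih => exact ih
  | bplus _ _ _ _ ih => exact ih

lemma forces_sat {h : Hd Atom} {t0 : ℚ} {A : Atom} {t : ℚ} (hf : Forces h t0 A t) :
    ∀ I : Interp Atom, sat I t0 h.toMA → A ∈ I t := by
  induction hf with
  | atom A t => exact fun I hs => hs
  | bminus ρ tt hmem hforce ih => exact fun I hs => ih I (hs _ hmem)
  | bplus ρ tt hmem hforce ih => exact fun I hs => ih I (hs _ hmem)

/-- The common step: either the derived fact already lands in the next materialisation
(through the relative rule application), or all witnessing maximal body intervals are
entailed by `D' k \ Δ k`. -/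
lemma seminaive_common {Atom : Type} (Φ : Set (Rule Atom)) (D' Δ N : ℕ → Dataset Atom)
    (k : ℕ) (hN : N (k + 1) = progApplyRel Φ (D' k) (Δ k))
    (hC : coalescedFrom (D' k ∪ N (k + 1)) (D' (k + 1)))
    (r : Rule Atom) (hr : r ∈ Φ) (hbot : ¬ r.head.isBot) (t0 : ℚ) (A : Atom) (t : ℚ)
    (hb : ∀ M ∈ r.body, sat (leastModel (D' k)) t0 M)
    (hF : Forces r.head t0 A t) :
    A ∈ leastModel (D' (k + 1)) t ∨
      ∀ M ∈ r.body, sat (leastModel (D' k \ Δ k)) t0 M := by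
  obtain ⟨ρs, hρs⟩ := exists_instance (D' k) t0 r.body hb
  have hinst : instOf r (D' k) ρs := hρs.imp (fun _ _ h => h.1)
  have ht0 : t0 ∈ interList ρs := mem_interList (hρs.imp (fun _ _ h => h.2))
  have hpt : ∀ t' ∈ ({t} : Set ℚ), ∀ I : Interp Atom,
      (∀ s ∈ interList ρs, sat I s r.head.toMA) → A ∈ I t' := by
    intro t' ht' I hI
    rw [Set.mem_singleton_iff] at ht'
    exact ht' ▸ forces_sat hF I (hI t0 ht0)
  obtain ⟨ρA, htA, hIA, hqA, hmaxA⟩ :=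
    exists_maxInterval
      (fun t' => ∀ I : Interp Atom, (∀ s ∈ interList ρs, sat I s r.head.toMA) → A ∈ I t')
      t (fun I hI => forces_sat hF I (hI t0 ht0))
  have hmfA : mfEntails r.head.toMA (interList ρs) A ρA :=
    fun I hI t' ht' => hqA t' ht' I hI
  have hmaxA' : ∀ ρ', IsInterval ρ' → mfEntails r.head.toMA (interList ρs) A ρ' →
      ρA ⊆ ρ' → ρ' = ρA := by
    intro ρ' hI' hmf' hsub
    exact hmaxA ρ' hI' (fun t' ht' I hI => hmf' I hI t' ht') hsub
  by_cases hrel : ∃ p ∈ r.body.zip ρs, ¬ dsat (D' k \ Δ k) p.1 p.2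
  · left
    have hmem : ((A, ρA) : DFact Atom) ∈ N (k + 1) := by
      rw [hN]
      exact ⟨r, hr, hbot, forces_atomOf hF, ρs, ⟨hinst, hrel⟩, hmfA, hIA, hmaxA'⟩
    have hA' : A ∈ leastModel (D' k ∪ N (k + 1)) t :=
      ⟨ρA, Set.mem_union_right _ hmem, htA⟩
    exact lm_sub_of_coal hC.1 t hA'
  · right
    push_neg at hrel
    intro M hM
    obtain ⟨ρ, hzip, hMρ⟩ := forall₂_zip_mem hρs hM
    exact hrel (M, ρ) hzip t0 hMρ.2

/-- Key lemma: facts surviving the `Δ`-filter are entailed by the previous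
materialisation. -/
lemma lm_diff_delta {Atom : Type} (D' Δ N : ℕ → Dataset Atom) (j : ℕ)
    (hC : coalescedFrom (D' j ∪ N (j + 1)) (D' (j + 1)))
    (hΔ : Δ (j + 1) =
      {F ∈ D' (j + 1) | ∃ G ∈ N (j + 1), dfactEntails F G ∧ ¬ factEntailedBy (D' j) G}) :
    ∀ t, leastModel (D' (j + 1) \ Δ (j + 1)) t ⊆ leastModel (D' j) t := by
  rintro t A ⟨ρ, ⟨hFD, hFΔ⟩, htρ⟩
  obtain ⟨G, hG, e, htG, hsub⟩ := coal_struct hC.1 (A, ρ) hFD t htρ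
  rcases hG with hG | hG
  · have := mem_lm hG htG
    rwa [e] at this
  · have hent : factEntailedBy (D' j) G := by
      by_contra hno
      apply hFΔ
      rw [hΔ]
      exact ⟨hFD, G, hG, ⟨e.symm, hsub⟩, hno⟩
    have := hent t htG
    rwa [e] at this

lemma seminaive_main_step {Atom : Type} (Φ : Set (Rule Atom)) (D : Dataset Atom)
    (hne : ∀ r ∈ Φ, ¬ ∃ t : ℚ, ∀ M ∈ r.body, sat (fun _ => (∅ : Set Atom)) t M)
    (D' Δ N : ℕ → Dataset Atom)
    (hD0 : D' 0 = D) (hΔ0 : Δ 0 = D)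
    (hN : ∀ k, N (k + 1) = progApplyRel Φ (D' k) (Δ k))
    (hC : ∀ k, coalescedFrom (D' k ∪ N (k + 1)) (D' (k + 1)))
    (hΔ : ∀ k, Δ (k + 1) =
      {F ∈ D' (k + 1) | ∃ G ∈ N (k + 1), dfactEntails F G ∧ ¬ factEntailedBy (D' k) G}) :
    ∀ k, ∀ r ∈ Φ, ¬ r.head.isBot → ∀ (t0 : ℚ) (A : Atom) (t : ℚ),
      (∀ M ∈ r.body, sat (leastModel (D' k)) t0 M) →
      Forces r.head t0 A t → A ∈ leastModel (D' (k + 1)) t := by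
  intro k
  induction k with
  | zero =>
    intro r hr hbot t0 A t hb hF
    rcases seminaive_common Φ D' Δ N 0 (hN 0) (hC 0) r hr hbot t0 A t hb hF with h | h
    · exact h
    · exfalso
      apply hne r hr
      refine ⟨t0, fun M hM => ?_⟩
      have hsub : ∀ s, leastModel (D' 0 \ Δ 0) s ⊆ (fun _ => (∅ : Set Atom)) s := by
        rintro s B ⟨ρ, hmem, -⟩
        rw [hD0, hΔ0] at hmem
        exact absurd hmem.1 hmem.2
      exact sat_mono hsub M t0 (h M hM)
  | succ j ih =>
    intro r hr hbot t0 A t hb hF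
    rcases seminaive_common Φ D' Δ N (j + 1) (hN (j + 1)) (hC (j + 1)) r hr hbot t0 A t hb hF
      with h | h
    · exact h
    · have hb' : ∀ M ∈ r.body, sat (leastModel (D' j)) t0 M := by
        intro M hM
        exact sat_mono (lm_diff_delta D' Δ N j (hC j) (hΔ j)) M t0 (h M hM)
      have hA : A ∈ leastModel (D' (j + 1)) t := ih r hr hbot t0 A t hb' hF
      have : A ∈ leastModel (D' (j + 1) ∪ N (j + 2)) t := by
        obtain ⟨ρ, hmem, htρ⟩ := hA
        exact ⟨ρ, Set.mem_union_left _ hmem, htρ⟩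
      exact lm_sub_of_coal (hC (j + 1)).1 t this

end SeminaiveAux

/-- completeness of seminaive materialisation (assuming no rule body
is satisfied by the empty interpretation). -/
theorem seminaive_complete {Atom : Type} (Φ : Set (Rule Atom)) (D : Dataset Atom)
    (hΦ : Φ.Finite) (hD : D.Finite)
    (hne : ∀ r ∈ Φ, ¬ ∃ t : ℚ, ∀ M ∈ r.body, sat (fun _ => (∅ : Set Atom)) t M)
    (D' Δ N : ℕ → Dataset Atom)
    (hD0 : D' 0 = D) (hΔ0 : Δ 0 = D)
    (hN : ∀ k, N (k + 1) = progApplyRel Φ (D' k) (Δ k))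
    (hC : ∀ k, coalescedFrom (D' k ∪ N (k + 1)) (D' (k + 1)))
    (hΔ : ∀ k, Δ (k + 1) =
      {F ∈ D' (k + 1) | ∃ G ∈ N (k + 1), dfactEntails F G ∧ ¬ factEntailedBy (D' k) G}) :
    ∀ (k : ℕ) (t : ℚ), (TP Φ)^[k] (leastModel D) t ⊆ leastModel (D' k) t := by
  intro k
  induction k with
  | zero =>
    intro t
    simp only [Function.iterate_zero, id_eq, hD0]
    exact fun A hA => hA
  | succ k ih =>
    intro t A hA
    rw [Function.iterate_succ_apply'] at hA
    simp only [TP, Set.mem_union, Set.mem_setOf_eq] at hA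
    rcases hA with hA | ⟨r, hr, hbot, t0, hb, hF⟩
    · have hA' : A ∈ leastModel (D' k) t := ih t hA
      have : A ∈ leastModel (D' k ∪ N (k + 1)) t := by
        obtain ⟨ρ, hmem, htρ⟩ := hA'
        exact ⟨ρ, Set.mem_union_left _ hmem, htρ⟩
      exact lm_sub_of_coal (hC k).1 t this
    · have hb' : ∀ M ∈ r.body, sat (leastModel (D' k)) t0 M :=
        fun M hM => sat_mono ih M t0 (hb M hM)
      exact seminaive_main_step Φ D hne D' Δ N hD0 hΔ0 hN hC hΔ k r hr hbot t0 A t hb' hF
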